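/- Let X ∈ ℝ^{n×d}, β ∈ ℝ^n, h, y ∈ ℝ^n, η > 0 and s > 0, and fix an index i with y_i > 0. Suppose: (a) β_i > 0, (b) h_i ≤ β_i, (c) ‖X X^T − s·I‖_op ≤ δ, (d) ‖h − y‖₂ ≤ E, and (e) η ≤ 1/s holds together with s·y_i > δ·E. Define β' = β − η X X^T D(β)(h − y), where D(β) is the diagonal 0/1 matrix of strictly positive coordinates of β. Then β'_i ≥ η(s·y_i − δ·E) > 0. -/
import Mathlib


open Matrix

/-- The diagonal 0/1 activation matrix: i-th diagonal entry is 1 iff `z i > 0`. -/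
noncomputable def actD {n : ℕ} (z : Fin n → ℝ) : Matrix (Fin n) (Fin n) ℝ :=
  Matrix.diagonal (fun i => if 0 < z i then (1 : ℝ) else 0)

/-- The ℓ₂ → ℓ₂ operator norm of a real matrix. -/
noncomputable def opNorm {m n : ℕ} (M : Matrix (Fin m) (Fin n) ℝ) : ℝ :=
  ‖LinearMap.toContinuousLinearMap (Matrix.toEuclideanLin M)‖

theorem stmt7 {n d : ℕ} (X : Matrix (Fin n) (Fin d) ℝ)
    (β h y : Fin n → ℝ) (η s δ E : ℝ) (i : Fin n)
    (hyi : 0 < y i) (hβi : 0 < β i) (hhi : h i ≤ β i)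
    (hop : opNorm (X * Xᵀ - s • 1) ≤ δ)
    (hE : Real.sqrt (∑ j, (h j - y j) ^ 2) ≤ E)
    (hη0 : 0 < η) (hs : 0 < s) (hηs : η ≤ 1 / s)
    (hgap : δ * E < s * y i) :
    η * (s * y i - δ * E) ≤ (β - η • (X * Xᵀ).mulVec ((actD β).mulVec (h - y))) i ∧
    0 < (β - η • (X * Xᵀ).mulVec ((actD β).mulVec (h - y))) i := by
  unfold actD
  unfold opNorm at hop
  set v : Fin n → ℝ := (Matrix.diagonal (fun i => if 0 < β i then (1:ℝ) else 0)).mulVec (h - y) with hvdef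
  have hv : ∀ j, v j = (if 0 < β j then (1:ℝ) else 0) * (h j - y j) := fun j =>
    mulVec_diagonal _ _ j
  have hδ : 0 ≤ δ := le_trans (norm_nonneg _) hop
  have hE0 : 0 ≤ E := le_trans (Real.sqrt_nonneg _) hE
  -- norm of v bounded by E
  set ev : EuclideanSpace ℝ (Fin n) := (WithLp.equiv 2 _).symm v with hev
  have hnv : ‖ev‖ ≤ E := by
    rw [EuclideanSpace.norm_eq]
    refine le_trans ?_ hE
    apply Real.sqrt_le_sqrt
    apply Finset.sum_le_sum
    intro j _
    rw [Real.norm_eq_abs, sq_abs]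
    show (v j) ^ 2 ≤ (h j - y j) ^ 2
    rw [hv j]
    split
    · simp
    · simp [sq_nonneg]
  set M : Matrix (Fin n) (Fin n) ℝ := X * Xᵀ - s • 1 with hM
  have hMv : ∀ j, |M.mulVec v j| ≤ δ * E := by
    intro j
    have h1 : ‖(LinearMap.toContinuousLinearMap (Matrix.toEuclideanLin M)) ev‖ ≤ δ * E := by
      calc ‖(LinearMap.toContinuousLinearMap (Matrix.toEuclideanLin M)) ev‖
          ≤ ‖LinearMap.toContinuousLinearMap (Matrix.toEuclideanLin M)‖ * ‖ev‖ :=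
            ContinuousLinearMap.le_opNorm _ _
        _ ≤ δ * E := mul_le_mul hop hnv (norm_nonneg _) hδ
    have heq : (LinearMap.toContinuousLinearMap (Matrix.toEuclideanLin M)) ev =
        (WithLp.equiv 2 _).symm (M.mulVec v) := rfl
    rw [heq] at h1
    refine le_trans ?_ h1
    rw [EuclideanSpace.norm_eq]
    rw [Real.le_sqrt (abs_nonneg _) (Finset.sum_nonneg fun k _ => sq_nonneg _), sq_abs]
    have : ((M.mulVec v j) ^ 2 : ℝ) = ‖(WithLp.equiv 2 (Fin n → ℝ)).symm (M.mulVec v) j‖ ^ 2 := by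
      rw [Real.norm_eq_abs, sq_abs]; rfl
    rw [this]
    exact Finset.single_le_sum (f := fun k => ‖(WithLp.equiv 2 (Fin n → ℝ)).symm (M.mulVec v) k‖ ^ 2)
      (fun k _ => sq_nonneg _) (Finset.mem_univ j)
  -- decomposition
  have hdecomp : (X * Xᵀ).mulVec v i = s * v i + M.mulVec v i := by
    have : M.mulVec v = (X * Xᵀ).mulVec v - s • v := by
      rw [hM, sub_mulVec, smul_mulVec, one_mulVec]
    have := congrFun this i
    simp only [Pi.sub_apply, Pi.smul_apply, smul_eq_mul] at this
    linarith
  have hvi : v i = h i - y i := by rw [hv i, if_pos hβi]; ring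
  have key : η * (s * y i - δ * E) ≤ β i - η * (X * Xᵀ).mulVec v i := by
    rw [hdecomp, hvi]
    have h2 : M.mulVec v i ≤ δ * E := le_of_abs_le (hMv i)
    have h3 : η * s ≤ 1 := by
      rw [le_div_iff₀ hs] at hηs; linarith
    have hA : 0 ≤ β i * (1 - η * s) := mul_nonneg hβi.le (by linarith)
    have hB : 0 ≤ η * s * (β i - h i) := mul_nonneg (mul_nonneg hη0.le hs.le) (by linarith)
    have hC : η * M.mulVec v i ≤ η * (δ * E) := mul_le_mul_of_nonneg_left h2 hη0.le
    nlinarith [hA, hB, hC]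
  constructor
  · simpa using key
  · have : 0 < η * (s * y i - δ * E) := mul_pos hη0 (by linarith)
    simp only [Pi.sub_apply, Pi.smul_apply, smul_eq_mul]
    linarith [key]
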